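/- arXiv:1210.3868 — 2 statements merged into one kernel-verified Lean document; each statement's English description precedes it below -/
import Mathlib

section
/- Let 0 = x_0 < x_1 < ⋯ < x_m < x_{m+1} = 1 and b = (b_1,…,b_m) ∈ ℝ^m. The piecewise linear impulsive problem -u'' = 0 on (0,1)∖{x_1,…,x_m}, u(0)=u(1)=0, u continuous at each x_j, u'(x_j^+) = u'(x_j^-) - b_j·u(x_j), has a nontrivial solution if and only if det(w_k(x_j)·b_j - δ_{jk})_{j,k=1}^m = 0, where w_k(x) = (1-x_k)x for x ≤ x_k and w_k(x) = x_k(1-x) for x ≥ x_k, and δ_{jk} is the Kronecker delta. -/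
lemma slopes_zero (m : ℕ) (x : ℕ → ℝ) (hx0 : x 0 = 0) (hx1 : x (m + 1) = 1)
    (hmono : ∀ i, i ≤ m → x i < x (i + 1)) (f : ℕ → ℝ)
    (hf0 : f 0 = 0) (hfm : f (m + 1) = 0)
    (hslope : ∀ j, j < m →
      (f (j + 2) - f (j + 1)) / (x (j + 2) - x (j + 1)) =
        (f (j + 1) - f j) / (x (j + 1) - x j)) :
    ∀ i, i ≤ m + 1 → f i = 0 := by
  have hne : ∀ i, i ≤ m → x (i + 1) - x i ≠ 0 := fun i hi =>
    sub_ne_zero.2 (hmono i hi).ne'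
  set s : ℝ := (f 1 - f 0) / (x 1 - x 0) with hs
  have claim1 : ∀ j, j ≤ m → (f (j + 1) - f j) / (x (j + 1) - x j) = s := by
    intro j hj
    induction j with
    | zero => rfl
    | succ n ih =>
        have hn : n < m := by omega
        rw [show n + 1 + 1 = n + 2 from rfl, hslope n hn]
        exact ih (by omega)
  have claim2 : ∀ i, i ≤ m + 1 → f i = s * (x i - x 0) := by
    intro i hi
    induction i with
    | zero => simp [hf0]
    | succ n ih =>
        have hn : n ≤ m := by omega
        have h1 := claim1 n hn
        have h2 := hne n hn
        have h3 : f (n + 1) - f n = s * (x (n + 1) - x n) := by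
          field_simp at h1; linarith [h1]
        have h4 := ih (by omega)
        nlinarith [h4]
  have hsz : s = 0 := by
    have := claim2 (m + 1) le_rfl
    rw [hfm, hx1, hx0] at this
    linarith
  intro i hi
  rw [claim2 i hi, hsz, zero_mul]

/-- A solution of the piecewise linear impulsive problem `-u'' = 0` on
`(0,1) ∖ {x 1,…,x m}` with Dirichlet boundary conditions, continuity at the nodes and the
jump conditions `u'(x_j^+) = u'(x_j^-) - b_j u(x_j)`: `u` is affine on each subinterval
(so `u'' = 0` there), vanishes at the endpoints, and the one-sided slopes
`(u(x_{j+1}) - u(x_j))/(x_{j+1} - x_j)` satisfy the jump condition at each interior node. -/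
def IsImpulsiveSolution (m : ℕ) (x : ℕ → ℝ) (b : Fin m → ℝ) (u : ℝ → ℝ) : Prop :=
  ContinuousOn u (Set.Icc 0 1) ∧ u 0 = 0 ∧ u 1 = 0 ∧
  (∀ j, j ≤ m → ∃ α β : ℝ, ∀ t ∈ Set.Icc (x j) (x (j + 1)), u t = α * t + β) ∧
  ∀ j : Fin m,
    (u (x (j + 2)) - u (x (j + 1))) / (x (j + 2) - x (j + 1)) -
      (u (x (j + 1)) - u (x j)) / (x (j + 1) - x j) = -(b j) * u (x (j + 1))

/-- the impulsive problem `-u'' = 0`, `u(0) = u(1) = 0`,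
`u'(x_j^+) = u'(x_j^-) - b_j u(x_j)` has a nontrivial solution if and only if
`det (w_k(x_j) b_j - δ_{jk}) = 0`, where `w_k(t) = (1 - x_k) t` for `t ≤ x_k` and
`w_k(t) = x_k (1 - t)` for `t ≥ x_k`. -/
theorem stmt9 (m : ℕ) (hm : 0 < m) (x : ℕ → ℝ)
    (hx0 : x 0 = 0) (hx1 : x (m + 1) = 1)
    (hmono : ∀ i, i ≤ m → x i < x (i + 1)) (b : Fin m → ℝ) :
    let W : Fin m → ℝ → ℝ := fun k t =>
      if t ≤ x (k + 1) then (1 - x (k + 1)) * t else x (k + 1) * (1 - t)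
    ((∃ u : ℝ → ℝ, IsImpulsiveSolution m x b u ∧ ∃ t ∈ Set.Icc (0:ℝ) 1, u t ≠ 0) ↔
      Matrix.det (Matrix.of fun j k : Fin m =>
        W k (x (j + 1)) * b j - if j = k then (1:ℝ) else 0) = 0) := by
  intro W
  -- basic monotonicity facts
  have hxle : ∀ i j : ℕ, i ≤ j → j ≤ m + 1 → x i ≤ x j := by
    intro i j hij hj
    induction j with
    | zero => simp_all
    | succ n ih =>
        rcases Nat.lt_or_ge i (n + 1) with h | h
        · exact le_trans (ih (by omega) (by omega)) (hmono n (by omega)).le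
        · have : i = n + 1 := by omega
          rw [this]
  have hxnn : ∀ i, i ≤ m + 1 → 0 ≤ x i := fun i hi => hx0 ▸ hxle 0 i (Nat.zero_le _) hi
  have hxle1 : ∀ i, i ≤ m + 1 → x i ≤ 1 := fun i hi => hx1 ▸ hxle i (m + 1) hi le_rfl
  have hne : ∀ i, i ≤ m → x (i + 1) - x i ≠ 0 := fun i hi => sub_ne_zero.2 (hmono i hi).ne'
  -- basic facts about W
  have hWle : ∀ (k : Fin m) (t : ℝ), t ≤ x ((k : ℕ) + 1) → W k t = (1 - x ((k : ℕ) + 1)) * t := by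
    intro k t ht; simp only [W, if_pos ht]
  have hWge : ∀ (k : Fin m) (t : ℝ), x ((k : ℕ) + 1) ≤ t → W k t = x ((k : ℕ) + 1) * (1 - t) := by
    intro k t ht
    simp only [W]; split_ifs with h
    · have : t = x ((k : ℕ) + 1) := le_antisymm h ht
      rw [this]; ring
    · rfl
  have hWcont : ∀ k : Fin m, Continuous (W k) := by
    intro k
    have heq : W k = fun t => min ((1 - x ((k : ℕ) + 1)) * t) (x ((k : ℕ) + 1) * (1 - t)) := by
      funext t
      rcases le_total t (x ((k : ℕ) + 1)) with h | h
      · rw [hWle k t h, min_eq_left (by nlinarith)]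
      · rw [hWge k t h, min_eq_right (by nlinarith)]
    rw [heq]; fun_prop
  have hW0 : ∀ k : Fin m, W k 0 = 0 := by
    intro k
    rw [hWle k 0 (hxnn ((k : ℕ) + 1) (by omega))]; ring
  have hW1 : ∀ k : Fin m, W k 1 = 0 := by
    intro k
    rw [hWge k 1 (hxle1 ((k : ℕ) + 1) (by omega))]; ring
  have hWaff : ∀ (k : Fin m) (i : ℕ), i ≤ m → ∃ α β : ℝ,
      ∀ t ∈ Set.Icc (x i) (x (i + 1)), W k t = α * t + β := by
    intro k i hi
    rcases le_or_gt (i + 1) ((k : ℕ) + 1) with h | h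
    · exact ⟨1 - x ((k : ℕ) + 1), 0, fun t ht => by
        rw [hWle k t (le_trans ht.2 (hxle (i + 1) ((k : ℕ) + 1) h (by omega)))]; ring⟩
    · exact ⟨-(x ((k : ℕ) + 1)), x ((k : ℕ) + 1), fun t ht => by
        rw [hWge k t (le_trans (hxle ((k : ℕ) + 1) i (by omega) (by omega)) ht.1)]; ring⟩
  -- the slope jump of W k at node j+1 is -δ_{jk}
  have hKJ : ∀ j k : Fin m,
      (W k (x ((j : ℕ) + 2)) - W k (x ((j : ℕ) + 1))) / (x ((j : ℕ) + 2) - x ((j : ℕ) + 1)) -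
        (W k (x ((j : ℕ) + 1)) - W k (x (j : ℕ))) / (x ((j : ℕ) + 1) - x (j : ℕ)) =
      if j = k then -1 else 0 := by
    intro j k
    have h1 : x ((j : ℕ) + 1) - x (j : ℕ) ≠ 0 := hne j (le_of_lt j.isLt)
    have h2 : x ((j : ℕ) + 2) - x ((j : ℕ) + 1) ≠ 0 := hne ((j : ℕ) + 1) j.isLt
    rcases lt_trichotomy (j : ℕ) (k : ℕ) with h | h | h
    · have e2 : x ((j : ℕ) + 2) ≤ x ((k : ℕ) + 1) := hxle _ _ (by omega) (by omega)
      have e1 : x ((j : ℕ) + 1) ≤ x ((k : ℕ) + 1) := hxle _ _ (by omega) (by omega)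
      have e0 : x (j : ℕ) ≤ x ((k : ℕ) + 1) := hxle _ _ (by omega) (by omega)
      rw [hWle k _ e2, hWle k _ e1, hWle k _ e0, if_neg (Fin.ne_of_val_ne h.ne)]
      field_simp
      ring
    · have hjk : j = k := Fin.ext h
      subst hjk
      have e0 : x (j : ℕ) ≤ x ((j : ℕ) + 1) := (hmono _ (le_of_lt j.isLt)).le
      have e2 : x ((j : ℕ) + 1) ≤ x ((j : ℕ) + 2) := (hmono _ j.isLt).le
      rw [hWle j _ le_rfl, hWle j _ e0, hWge j _ e2, if_pos rfl]
      field_simp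
      ring
    · have e2 : x ((k : ℕ) + 1) ≤ x ((j : ℕ) + 2) := hxle _ _ (by omega) (by omega)
      have e1 : x ((k : ℕ) + 1) ≤ x ((j : ℕ) + 1) := hxle _ _ (by omega) (by omega)
      have e0 : x ((k : ℕ) + 1) ≤ x (j : ℕ) := hxle _ _ (by omega) (by omega)
      rw [hWge k _ e2, hWge k _ e1, hWge k _ e0, if_neg (Fin.ne_of_val_ne h.ne')]
      field_simp
      ring
  -- slope jump of a combination of the W k
  have hGjump : ∀ (c : Fin m → ℝ) (j : Fin m),
      ((∑ k, c k * W k (x ((j : ℕ) + 2))) - ∑ k, c k * W k (x ((j : ℕ) + 1))) /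
          (x ((j : ℕ) + 2) - x ((j : ℕ) + 1)) -
        ((∑ k, c k * W k (x ((j : ℕ) + 1))) - ∑ k, c k * W k (x (j : ℕ))) /
          (x ((j : ℕ) + 1) - x (j : ℕ)) = -(c j) := by
    intro c j
    have step : ((∑ k, c k * W k (x ((j : ℕ) + 2))) - ∑ k, c k * W k (x ((j : ℕ) + 1))) /
          (x ((j : ℕ) + 2) - x ((j : ℕ) + 1)) -
        ((∑ k, c k * W k (x ((j : ℕ) + 1))) - ∑ k, c k * W k (x (j : ℕ))) /
          (x ((j : ℕ) + 1) - x (j : ℕ)) =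
        ∑ k, c k * ((W k (x ((j : ℕ) + 2)) - W k (x ((j : ℕ) + 1))) /
            (x ((j : ℕ) + 2) - x ((j : ℕ) + 1)) -
          (W k (x ((j : ℕ) + 1)) - W k (x (j : ℕ))) / (x ((j : ℕ) + 1) - x (j : ℕ))) := by
      rw [← Finset.sum_sub_distrib, ← Finset.sum_sub_distrib, Finset.sum_div, Finset.sum_div,
        ← Finset.sum_sub_distrib]
      exact Finset.sum_congr rfl fun k _ => by ring
    rw [step]
    have step2 : ∀ k : Fin m, k ∈ Finset.univ →
        c k * ((W k (x ((j : ℕ) + 2)) - W k (x ((j : ℕ) + 1))) /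
            (x ((j : ℕ) + 2) - x ((j : ℕ) + 1)) -
          (W k (x ((j : ℕ) + 1)) - W k (x (j : ℕ))) / (x ((j : ℕ) + 1) - x (j : ℕ))) =
        c k * (if j = k then (-1 : ℝ) else 0) := fun k _ => by rw [hKJ j k]
    rw [Finset.sum_congr rfl step2]
    simp [Finset.sum_ite_eq]
  -- covering lemma
  have hcover : ∀ t : ℝ, 0 ≤ t → t ≤ 1 → ∃ i, i ≤ m ∧ x i ≤ t ∧ t ≤ x (i + 1) := by
    intro t h0 h1'
    by_contra hno
    push_neg at hno
    have claim : ∀ i, i ≤ m + 1 → x i ≤ t := by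
      intro i hi
      induction i with
      | zero => rw [hx0]; exact h0
      | succ n ih =>
          have hxn := ih (by omega)
          rcases le_or_gt t (x (n + 1)) with h | h
          · exact absurd (hno n (by omega) hxn) (not_lt.2 h)
          · exact h.le
    have ht1 : t = 1 := le_antisymm h1' (hx1 ▸ claim (m + 1) le_rfl)
    have h2 := hno m le_rfl (claim m (by omega))
    rw [hx1] at h2; linarith
  -- zero at nodes implies zero everywhere
  have hzero : ∀ u : ℝ → ℝ,
      (∀ j, j ≤ m → ∃ α β : ℝ, ∀ t ∈ Set.Icc (x j) (x (j + 1)), u t = α * t + β) →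
      (∀ i, i ≤ m + 1 → u (x i) = 0) → ∀ t ∈ Set.Icc (0 : ℝ) 1, u t = 0 := by
    intro u haff hnode t ht
    obtain ⟨i, hi, hl, hr⟩ := hcover t ht.1 ht.2
    obtain ⟨α, β, hab⟩ := haff i hi
    have h1 := hab (x i) ⟨le_rfl, (hmono i hi).le⟩
    have h2 := hab (x (i + 1)) ⟨(hmono i hi).le, le_rfl⟩
    rw [hnode i (by omega)] at h1
    rw [hnode (i + 1) (by omega)] at h2
    have hd := hmono i hi
    have hα : α = 0 := by
      rcases mul_eq_zero.1 (show α * (x (i + 1) - x i) = 0 by linarith [h1, h2]) with h | h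
      · exact h
      · exact absurd h (hne i hi)
    have hβ : β = 0 := by rw [hα] at h1; linarith [h1]
    rw [hab t ⟨hl, hr⟩, hα, hβ]; ring
  -- kernel characterization
  rw [← Matrix.exists_mulVec_eq_zero_iff]
  have key : ∀ c : Fin m → ℝ,
      ((Matrix.of fun j k : Fin m =>
        W k (x ((j : ℕ) + 1)) * b j - if j = k then (1 : ℝ) else 0).mulVec c = 0) ↔
      ∀ j : Fin m, b j * (∑ k, c k * W k (x ((j : ℕ) + 1))) = c j := by
    intro c
    rw [funext_iff]
    apply forall_congr'
    intro j
    rw [Matrix.mulVec, Pi.zero_apply]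
    simp only [Matrix.of_apply, Matrix.mulVec, dotProduct, sub_mul, Finset.sum_sub_distrib, ite_mul, one_mul,
      zero_mul, Finset.sum_ite_eq, Finset.mem_univ, if_true]
    have hs : ∑ k, W k (x ((j : ℕ) + 1)) * b j * c k =
        b j * ∑ k, c k * W k (x ((j : ℕ) + 1)) := by
      rw [Finset.mul_sum]; exact Finset.sum_congr rfl fun k _ => by ring
    rw [hs, sub_eq_zero]
  constructor
  · -- solution ⇒ singular
    rintro ⟨u, ⟨hcont, hu0, hu1, haff, hjump⟩, t0, ht0, hut0⟩
    set c : Fin m → ℝ := fun k => b k * u (x ((k : ℕ) + 1)) with hcdef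
    -- the node values of u agree with those of ∑ c k W k
    set e : ℕ → ℝ := fun i => u (x i) - ∑ k, c k * W k (x i) with hedef
    have he0 : e 0 = 0 := by
      simp only [e, hx0, hu0]
      simp [hW0]
    have hem : e (m + 1) = 0 := by
      simp only [e, hx1, hu1]
      simp [hW1]
    have hejump : ∀ j, j < m →
        (e (j + 2) - e (j + 1)) / (x (j + 2) - x (j + 1)) =
          (e (j + 1) - e j) / (x (j + 1) - x j) := by
      intro j hj
      have hju := hjump ⟨j, hj⟩
      have hgj := hGjump c ⟨j, hj⟩
      simp only [Fin.val_mk] at hju hgj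
      simp only [e]
      have expand : ∀ A B C D h : ℝ, (A - C - (B - D)) / h = (A - B) / h - (C - D) / h :=
        fun A B C D h => by ring
      rw [expand, expand]
      have hcc : -b ⟨j, hj⟩ * u (x (j + 1)) = -(c ⟨j, hj⟩) := by simp [hcdef]
      rw [hcc] at hju
      linarith [hju, hgj]
    have heall := slopes_zero m x hx0 hx1 hmono e he0 hem hejump
    have hnodes : ∀ i, i ≤ m + 1 → u (x i) = ∑ k, c k * W k (x i) := by
      intro i hi
      have := heall i hi
      simp only [e] at this
      linarith
    have hc0 : c ≠ 0 := by
      intro hczero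
      -- then u vanishes at all nodes, hence everywhere
      have hvjump : ∀ j, j < m →
          (u (x (j + 2)) - u (x (j + 1))) / (x (j + 2) - x (j + 1)) =
            (u (x (j + 1)) - u (x j)) / (x (j + 1) - x j) := by
        intro j hj
        have hju := hjump ⟨j, hj⟩
        simp only [Fin.val_mk] at hju
        have hcz : b ⟨j, hj⟩ * u (x (j + 1)) = 0 := by
          have := congrFun hczero ⟨j, hj⟩
          simpa [hcdef] using this
        linarith [hju, hcz]
      have hv0 : u (x 0) = 0 := by rw [hx0]; exact hu0
      have hvm : u (x (m + 1)) = 0 := by rw [hx1]; exact hu1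
      have := slopes_zero m x hx0 hx1 hmono (fun i => u (x i)) hv0 hvm hvjump
      exact hut0 (hzero u haff this t0 ht0)
    refine ⟨c, hc0, (key c).2 fun j => ?_⟩
    rw [← hnodes ((j : ℕ) + 1) (by omega)]
  · -- singular ⇒ solution
    rintro ⟨c, hc0, hmv⟩
    rw [key c] at hmv
    refine ⟨fun t => ∑ k, c k * W k t, ⟨?_, ?_, ?_, ?_, ?_⟩, ?_⟩
    · exact (continuous_finset_sum _ fun k _ => continuous_const.mul (hWcont k)).continuousOn
    · simp [hW0]
    · simp [hW1]
    · intro i hi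
      choose α β hab using fun k : Fin m => hWaff k i hi
      refine ⟨∑ k, c k * α k, ∑ k, c k * β k, fun t ht => ?_⟩
      calc ∑ k, c k * W k t = ∑ k, (c k * α k * t + c k * β k) :=
            Finset.sum_congr rfl fun k _ => by rw [hab k t ht]; ring
        _ = (∑ k, c k * α k) * t + ∑ k, c k * β k := by
            rw [Finset.sum_add_distrib, Finset.sum_mul]
    · intro j
      have := hGjump c j
      rw [this]
      rw [← hmv j]
      ring
    · have : ∃ j, c j ≠ 0 := by
        by_contra h
        push_neg at h
        exact hc0 (funext h)
      obtain ⟨j, hj⟩ := this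
      refine ⟨x ((j : ℕ) + 1), ⟨hxnn _ (by omega), hxle1 _ (by omega)⟩, ?_⟩
      intro h0
      have h0' : (∑ k, c k * W k (x ((j : ℕ) + 1))) = 0 := h0
      exact hj (by rw [← hmv j, h0', mul_zero])
end

section
/- Suppose ı : ℝ → ℝ is continuous and satisfies t·ı(t) ≥ c|t|^μ - C for all t ∈ ℝ, with μ > 2, c > 0, C ≥ 0. Then its primitive I(t) = ∫_0^t ı(s) ds satisfies I(t) ≥ c̃|t|^μ - C̃ for all t ∈ ℝ, for some constants c̃ > 0 and C̃ ≥ 0 (one may take c̃ = c/μ). -/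
open intervalIntegral

lemma aux15 (im : ℝ → ℝ) (hcont : Continuous im)
    (c C μ : ℝ) (hc : 0 < c) (hC : 0 ≤ C) (hμ : 2 < μ)
    (h : ∀ t : ℝ, t * im t ≥ c * |t| ^ μ - C) :
    ∃ Ctilde : ℝ, 0 ≤ Ctilde ∧
      ∀ t : ℝ, 0 ≤ t → (∫ s in (0:ℝ)..t, im s) ≥ c / (2 * μ) * t ^ μ - Ctilde := by
  obtain ⟨T, hT1, hTC⟩ : ∃ T : ℝ, 1 ≤ T ∧ 2 * C / c ≤ T :=
    ⟨max 1 (2 * C / c), le_max_left _ _, le_max_right _ _⟩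
  have hT0 : 0 < T := by linarith
  have hμ0 : 0 < μ := by linarith
  have key : ∀ s : ℝ, T ≤ s → c / 2 * s ^ (μ - 1) ≤ im s := by
    intro s hs
    have hs1 : 1 ≤ s := le_trans hT1 hs
    have hs0 : 0 < s := by linarith
    have h1 := h s
    rw [abs_of_pos hs0] at h1
    have hTs : T ^ μ ≤ s ^ μ := Real.rpow_le_rpow hT0.le hs hμ0.le
    have hTT : T ≤ T ^ μ := by
      calc T = T ^ (1:ℝ) := (Real.rpow_one T).symm
      _ ≤ T ^ μ := Real.rpow_le_rpow_of_exponent_le hT1 (by linarith)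
    have hCs : 2 * C / c ≤ s ^ μ := by linarith
    have hCs' : 2 * C ≤ c * s ^ μ := by
      rw [div_le_iff₀ hc] at hCs; linarith
    have hsplit : s ^ μ = s ^ (μ - 1) * s := by
      have h2 := Real.rpow_add_one hs0.ne' (μ - 1)
      rw [sub_add_cancel] at h2
      exact h2
    have hmul : s * (c / 2 * s ^ (μ - 1)) ≤ s * im s := by
      have he : s * (c / 2 * s ^ (μ - 1)) = c / 2 * s ^ μ := by
        rw [hsplit]; ring
      rw [he]; linarith
    exact le_of_mul_le_mul_left hmul hs0
  have hint : ∀ a b : ℝ, IntervalIntegrable im MeasureTheory.volume a b :=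
    fun a b => hcont.intervalIntegrable a b
  have hIcont : Continuous fun t => ∫ s in (0:ℝ)..t, im s :=
    intervalIntegral.continuous_primitive hint 0
  obtain ⟨x0, hx0, hmin⟩ := isCompact_Icc.exists_isMinOn (Set.nonempty_Icc.mpr hT0.le)
      hIcont.continuousOn
  set m : ℝ := ∫ s in (0:ℝ)..x0, im s with hmdef
  set cμ : ℝ := c / (2 * μ) with hcμdef
  have hcμ : 0 < cμ := by positivity
  refine ⟨max 0 (cμ * T ^ μ - m), le_max_left _ _, ?_⟩
  intro t ht
  have hCt : cμ * T ^ μ - m ≤ max 0 (cμ * T ^ μ - m) := le_max_right _ _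
  rcases le_or_gt t T with htT | htT
  · have h1 : m ≤ ∫ s in (0:ℝ)..t, im s := hmin ⟨ht, htT⟩
    have h2 : t ^ μ ≤ T ^ μ := Real.rpow_le_rpow ht htT hμ0.le
    have h3 : cμ * t ^ μ ≤ cμ * T ^ μ := by nlinarith
    linarith
  · have hsplit : (∫ s in (0:ℝ)..T, im s) + (∫ s in T..t, im s)
        = ∫ s in (0:ℝ)..t, im s :=
      intervalIntegral.integral_add_adjacent_intervals (hint 0 T) (hint T t)
    have hg : IntervalIntegrable (fun s => c / 2 * s ^ (μ - 1)) MeasureTheory.volume T t :=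
      (intervalIntegral.intervalIntegrable_rpow' (by linarith)).const_mul _
    have hmono : (∫ s in T..t, c / 2 * s ^ (μ - 1)) ≤ ∫ s in T..t, im s := by
      apply intervalIntegral.integral_mono_on htT.le hg (hint T t)
      intro x hx
      exact key x hx.1
    have hval : (∫ s in T..t, c / 2 * s ^ (μ - 1)) = cμ * (t ^ μ - T ^ μ) := by
      rw [intervalIntegral.integral_const_mul, integral_rpow (Or.inl (by linarith)),
        sub_add_cancel, hcμdef]
      field_simp
    have hIT : m ≤ ∫ s in (0:ℝ)..T, im s := hmin ⟨hT0.le, le_rfl⟩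
    linarith

/-- if `im : ℝ → ℝ` is continuous and `t im(t) ≥ c|t|^μ - C` for all `t`, with
`μ > 2`, `c > 0`, `C ≥ 0`, then the primitive `I(t) = ∫_0^t im(s) ds` satisfies
`I(t) ≥ c̃|t|^μ - C̃` for some `c̃ > 0` and `C̃ ≥ 0`. -/
theorem stmt15 (im : ℝ → ℝ) (hcont : Continuous im)
    (c C μ : ℝ) (hc : 0 < c) (hC : 0 ≤ C) (hμ : 2 < μ)
    (h : ∀ t : ℝ, t * im t ≥ c * |t| ^ μ - C) :
    ∃ ctilde Ctilde : ℝ, 0 < ctilde ∧ 0 ≤ Ctilde ∧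
      ∀ t : ℝ, (∫ s in (0:ℝ)..t, im s) ≥ ctilde * |t| ^ μ - Ctilde := by
  obtain ⟨C1, hC1, h1⟩ := aux15 im hcont c C μ hc hC hμ h
  set g : ℝ → ℝ := fun s => -im (-s) with hgdef
  have hgcont : Continuous g := (hcont.comp continuous_neg).neg
  have hgineq : ∀ t : ℝ, t * g t ≥ c * |t| ^ μ - C := by
    intro t
    have := h (-t)
    simp only [hgdef]
    rw [abs_neg] at this
    calc c * |t| ^ μ - C ≤ (-t) * im (-t) := this
    _ = t * -im (-t) := by ring
  obtain ⟨C2, hC2, h2⟩ := aux15 g hgcont c C μ hc hC hμ hgineq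
  refine ⟨c / (2 * μ), max C1 C2, by positivity, le_trans hC1 (le_max_left _ _), ?_⟩
  intro t
  rcases le_or_gt 0 t with ht | ht
  · have := h1 t ht
    rw [abs_of_nonneg ht]
    have : C1 ≤ max C1 C2 := le_max_left _ _
    have := h1 t ht
    linarith [le_max_left C1 C2, h1 t ht]
  · have hneg : (0:ℝ) ≤ -t := by linarith
    have hgint := h2 (-t) hneg
    have hchange : (∫ s in (0:ℝ)..(-t), g s) = ∫ s in (0:ℝ)..t, im s := by
      simp only [hgdef]
      rw [intervalIntegral.integral_neg]
      have : (∫ s in (0:ℝ)..(-t), im (-s)) = ∫ s in t..(0:ℝ), im s := by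
        have := intervalIntegral.integral_comp_neg (a := (0:ℝ)) (b := -t) (f := im)
        simpa using this
      rw [this, intervalIntegral.integral_symm]
      ring
    rw [hchange] at hgint
    rw [abs_of_neg ht]
    linarith [le_max_right C1 C2]
end
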